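/- arXiv:math/0410616 — 2 statements merged into one kernel-verified Lean document; each statement's English description precedes it below -/
import Mathlib

section
/- Let w ∈ L₂ = ℤ₂ ≀ ℤ have normal form a_{i₁} ⋯ a_{i_m} a_{−j₁} ⋯ a_{−j_l} t^r with 0 < i₁ < ⋯ < i_m and 0 ≤ j₁ < ⋯ < j_l. Then the word length of w with respect to the automata generating set {t, ta} is D'(w), where D'(w) = i_m + |r − i_m| if l = 0, and D'(w) = min(2(j_l + 1) + i_m + |r − i_m|, 2 i_m + j_l + 1 + |r + j_l + 1|) otherwise. -/
open scoped commutatorElement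

/-- Relators for the lamplighter group `L_m = ℤ_m ≀ ℤ` in the wreath product
presentation `⟨a, t | a^m, [t^i a t^{-i}, t^j a t^{-j}]⟩`, where `a` is encoded
by `true` and `t` by `false`. -/
def lampRels (m : ℕ) : Set (FreeGroup Bool) :=
  {FreeGroup.of true ^ m} ∪
  {r | ∃ i j : ℤ,
    r = ⁅FreeGroup.of false ^ i * FreeGroup.of true * FreeGroup.of false ^ (-i),
        FreeGroup.of false ^ j * FreeGroup.of true * FreeGroup.of false ^ (-j)⁆}

/-- The lamplighter group `L_m = ℤ_m ≀ ℤ`. -/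
abbrev Lamp (m : ℕ) := PresentedGroup (lampRels m)

/-- The generator `a` of `L_m`. -/
noncomputable def la (m : ℕ) : Lamp m := PresentedGroup.of true

/-- The generator `t` of `L_m`. -/
noncomputable def lt (m : ℕ) : Lamp m := PresentedGroup.of false

/-- Word length of `g` with respect to the generating set `S` (and inverses):
the least length of a list of elements of `S ∪ S⁻¹` with product `g`. -/
noncomputable def wordLength {G : Type*} [Group G] (S : Set G) (g : G) : ℕ :=
  sInf {n | ∃ l : List G, (∀ x ∈ l, x ∈ S ∨ x⁻¹ ∈ S) ∧ l.length = n ∧ l.prod = g}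

/-- The conjugate `a_k = t^k a t^{-k}` in `L₂`. -/
noncomputable def lampA (k : ℤ) : Lamp 2 := lt 2 ^ k * la 2 * lt 2 ^ (-k)

/-!
Upper bound: light the positive lamps with `ta` while the cursor sweeps right to `i_m` and the
others with `(ta)⁻¹` while it sweeps left to `-(j_l + 1)`, in either order, then walk to `r`.

Lower bound: in the model `(ℤ →₀ ZMod 2) ⋊ ℤ`, let `A` and `-B` be the extreme cursor positions
needed to toggle the lit lamps, and take as potential the length of the shortest path from `0`
through `A` and `-B` to the cursor. A generator moves the cursor along one edge and toggles at
most the lamp at the right end of that edge, so it can push `A` or `-B` out only to where the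
cursor goes; hence it changes the potential by at most one.
-/

theorem Finsupp.support_sum_map_single_of_nodup {α M : Type*} [DecidableEq α] [AddMonoid M]
    {v : M} (hv : v ≠ 0) {L : List α} (hL : L.Nodup) :
    (L.map fun p => Finsupp.single p v).sum.support = L.toFinset := by
  induction L with
  | nil => simp
  | cons a L ih =>
    obtain ⟨haL, hL⟩ := List.nodup_cons.1 hL
    have hdisj : Disjoint (Finsupp.single a v).support
        (L.map fun p => Finsupp.single p v).sum.support := by
      simpa [Finsupp.support_single a hv, ih hL] using haL
    rw [List.map_cons, List.sum_cons, Finsupp.support_add_eq hdisj, Finsupp.support_single a hv,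
      ih hL, List.toFinset_cons, Finset.insert_eq]

theorem List.Pairwise.le_getLast?_getD {α : Type*} [Preorder α] {L : List α}
    (hL : L.Pairwise (· ≤ ·)) (d : α) {x : α} (hx : x ∈ L) : x ≤ L.getLast?.getD d := by
  rw [List.getLast?_eq_some_getLast (List.ne_nil_of_mem hx), Option.getD_some]
  exact hL.rel_getLast hx

theorem List.getLast?_getD_eq_or_mem {α : Type*} (L : List α) (d : α) :
    L.getLast?.getD d = d ∨ L.getLast?.getD d ∈ L := by
  cases h : L.getLast?
  exacts [Or.inl rfl, Or.inr (List.mem_of_getLast? h)]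

section WordLength

variable {G : Type*} [Group G] {S : Set G}

theorem wordLength_le_length {L : List G} (hL : ∀ x ∈ L, x ∈ S ∨ x⁻¹ ∈ S) :
    wordLength S L.prod ≤ L.length :=
  Nat.sInf_le ⟨L, hL, rfl, rfl⟩

theorem exists_list_length_eq_wordLength {g : G} (hg : g ∈ Subgroup.closure S) :
    ∃ L : List G, (∀ x ∈ L, x ∈ S ∨ x⁻¹ ∈ S) ∧ L.length = wordLength S g ∧ L.prod = g := by
  rw [← Subgroup.mem_toSubmonoid, Subgroup.closure_toSubmonoid] at hg
  obtain ⟨L, hL, rfl⟩ := Submonoid.exists_list_of_mem_closure hg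
  exact Nat.sInf_mem
    (s := {n | ∃ K : List G, (∀ x ∈ K, x ∈ S ∨ x⁻¹ ∈ S) ∧ K.length = n ∧ K.prod = L.prod})
    ⟨_, L, hL, rfl, rfl⟩

theorem wordLength_mul_le (hS : Subgroup.closure S = ⊤) (g h : G) :
    wordLength S (g * h) ≤ wordLength S g + wordLength S h := by
  obtain ⟨L, hL, hLlen, rfl⟩ := exists_list_length_eq_wordLength (hS ▸ Subgroup.mem_top g)
  obtain ⟨K, hK, hKlen, rfl⟩ := exists_list_length_eq_wordLength (hS ▸ Subgroup.mem_top h)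
  rw [← hLlen, ← hKlen, ← List.length_append, ← List.prod_append]
  exact wordLength_le_length fun x hx => (List.mem_append.1 hx).elim (hL x) (hK x)

theorem wordLength_le_one {x : G} (hx : x ∈ S ∨ x⁻¹ ∈ S) : wordLength S x ≤ 1 := by
  simpa using wordLength_le_length (L := [x]) (by simpa using hx)

theorem wordLength_pow_le {x : G} (hx : x ∈ S ∨ x⁻¹ ∈ S) (n : ℕ) :
    wordLength S (x ^ n) ≤ n := by
  simpa using wordLength_le_length (L := List.replicate n x) fun y hy =>
    List.eq_of_mem_replicate hy ▸ hx

theorem wordLength_zpow_le {x : G} (hx : x ∈ S ∨ x⁻¹ ∈ S) (k : ℤ) :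
    (wordLength S (x ^ k) : ℤ) ≤ |k| := by
  obtain ⟨n, rfl | rfl⟩ := Int.eq_nat_or_neg k
  · simpa using wordLength_pow_le hx n
  · have hx' : x⁻¹ ∈ S ∨ x⁻¹⁻¹ ∈ S := by rwa [inv_inv, or_comm]
    simpa [zpow_neg, ← inv_pow] using wordLength_pow_le hx' n

theorem le_wordLength (φ : G → ℤ) (hφ1 : φ 1 ≤ 0)
    (hφ : ∀ g x, x ∈ S ∨ x⁻¹ ∈ S → φ (g * x) ≤ φ g + 1) {g : G}
    (hg : g ∈ Subgroup.closure S) : φ g ≤ wordLength S g := by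
  obtain ⟨L, hL, hlen, rfl⟩ := exists_list_length_eq_wordLength hg
  rw [← hlen]
  clear hlen hg
  induction L using List.reverseRecOn with
  | nil => simpa using hφ1
  | append_singleton L x ih =>
    have hstep := hφ L.prod x (hL x (by simp))
    have hL' := ih fun y hy => hL y (by simp [hy])
    rw [List.prod_append, List.prod_singleton, List.length_append, List.length_singleton]
    push_cast
    omega

end WordLength

/-- For `A, B ≥ 0`, the length of the shortest path in `ℤ` from `0` to `c` through `A` and `-B`. -/
def sweepLength (A B c : ℤ) : ℤ := min (2 * B + A + |c - A|) (2 * A + B + |c + B|)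

theorem sweepLength_le_add_one {A B A' B' c c' : ℤ} (hA : 0 ≤ A) (hB : 0 ≤ B) (hA' : 0 ≤ A')
    (hB' : 0 ≤ B') (hc : c' = c + 1 ∨ c' = c - 1) (hAA' : A' ≤ max A (max c c'))
    (hBB' : B' ≤ max B (1 - max c c')) :
    sweepLength A' B' c' ≤ sweepLength A B c + 1 := by
  simp only [sweepLength, abs_eq_max_neg]
  omega

/-- The lamplighter group `M ≀ ℤ`, as the semidirect product `(ℤ →₀ M) ⋊ ℤ`. -/
@[ext] structure LampModel (M : Type*) [Zero M] where
  lamps : ℤ →₀ M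
  pos : ℤ

namespace LampModel

section Reach

variable {M : Type*} [Zero M]

noncomputable def reach (e : ℤ → ℤ) (f : ℤ →₀ M) : ℤ := (f.support.sup fun x => (e x).toNat : ℕ)

variable {e : ℤ → ℤ} {f f' : ℤ →₀ M} {n : ℤ}

theorem reach_nonneg : 0 ≤ reach e f := Int.natCast_nonneg _

theorem le_reach {x : ℤ} (hx : x ∈ f.support) : e x ≤ reach e f := by
  have := Finset.le_sup (f := fun x => (e x).toNat) hx
  unfold reach
  omega

theorem reach_le (hn : 0 ≤ n) (h : ∀ x ∈ f.support, e x ≤ n) : reach e f ≤ n := by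
  have : f.support.sup (fun x => (e x).toNat) ≤ n.toNat :=
    Finset.sup_le fun x hx => by have := h x hx; omega
  unfold reach
  omega

theorem reach_eq (hn : 0 ≤ n) (h : ∀ x ∈ f.support, e x ≤ n)
    (hmem : n = 0 ∨ ∃ x ∈ f.support, e x = n) : reach e f = n := by
  refine le_antisymm (reach_le hn h) ?_
  obtain rfl | ⟨x, hx, rfl⟩ := hmem
  exacts [reach_nonneg, le_reach hx]

theorem reach_le_max_of_subset_insert {q : ℤ} (h : f'.support ⊆ insert q f.support) :
    reach e f' ≤ max (reach e f) (e q) := by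
  refine reach_le (le_max_of_le_left reach_nonneg) fun x hx => ?_
  rcases Finset.mem_insert.1 (h hx) with rfl | hx
  exacts [le_max_right _ _, le_max_of_le_left (le_reach hx)]

@[simp] theorem reach_zero : reach e (0 : ℤ →₀ M) = 0 := by simp [reach]

end Reach

variable {M : Type*} [AddCommGroup M]

noncomputable def shift (c : ℤ) : (ℤ →₀ M) ≃+ (ℤ →₀ M) := Finsupp.domCongr (Equiv.addRight c)

@[simp] theorem shift_apply (c : ℤ) (f : ℤ →₀ M) (x : ℤ) : shift c f x = f (x - c) := rfl

@[simp] theorem shift_single (c a : ℤ) (v : M) :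
    shift c (Finsupp.single a v) = Finsupp.single (a + c) v := by
  simp [shift, Finsupp.domCongr_apply, Finsupp.equivMapDomain_single]

theorem mem_support_shift {c x : ℤ} {f : ℤ →₀ M} :
    x ∈ (shift c f).support ↔ x - c ∈ f.support := by
  simp

noncomputable instance : Mul (LampModel M) :=
  ⟨fun g h => ⟨g.lamps + shift g.pos h.lamps, g.pos + h.pos⟩⟩
noncomputable instance : One (LampModel M) := ⟨⟨0, 0⟩⟩
noncomputable instance : Inv (LampModel M) := ⟨fun g => ⟨shift (-g.pos) (-g.lamps), -g.pos⟩⟩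

@[simp] theorem mul_lamps (g h : LampModel M) :
    (g * h).lamps = g.lamps + shift g.pos h.lamps := rfl
@[simp] theorem mul_pos (g h : LampModel M) : (g * h).pos = g.pos + h.pos := rfl
@[simp] theorem one_lamps : (1 : LampModel M).lamps = 0 := rfl
@[simp] theorem one_pos : (1 : LampModel M).pos = 0 := rfl
@[simp] theorem inv_lamps (g : LampModel M) : g⁻¹.lamps = shift (-g.pos) (-g.lamps) := rfl
@[simp] theorem inv_pos (g : LampModel M) : g⁻¹.pos = -g.pos := rfl

noncomputable instance : Group (LampModel M) where
  mul_assoc g h k := by ext <;> simp [sub_sub] <;> abel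
  one_mul g := by ext <;> simp
  mul_one g := by ext <;> simp
  inv_mul_cancel g := by ext <;> simp

noncomputable def ofPos : Multiplicative ℤ →* LampModel M where
  toFun k := ⟨0, k.toAdd⟩
  map_one' := rfl
  map_mul' k k' := by ext <;> simp

noncomputable def ofLamps : Multiplicative (ℤ →₀ M) →* LampModel M where
  toFun f := ⟨f.toAdd, 0⟩
  map_one' := rfl
  map_mul' f f' := by ext <;> simp

@[simp] theorem ofPos_lamps (k : Multiplicative ℤ) : (ofPos k : LampModel M).lamps = 0 := rfl
@[simp] theorem ofPos_pos (k : Multiplicative ℤ) : (ofPos k : LampModel M).pos = k.toAdd := rfl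
@[simp] theorem ofLamps_lamps (f : Multiplicative (ℤ →₀ M)) : (ofLamps f).lamps = f.toAdd := rfl
@[simp] theorem ofLamps_pos (f : Multiplicative (ℤ →₀ M)) : (ofLamps f).pos = 0 := rfl

theorem ofPos_ofAdd_one_zpow (k : ℤ) :
    (ofPos (.ofAdd 1) : LampModel M) ^ k = ofPos (.ofAdd k) := by
  rw [← map_zpow, ← ofAdd_zsmul, smul_eq_mul, mul_one]

theorem ofPos_mul_ofLamps_mul_ofPos (k : ℤ) (f : ℤ →₀ M) :
    ofPos (.ofAdd k) * ofLamps (.ofAdd f) * ofPos (.ofAdd (-k)) =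
      ofLamps (.ofAdd (shift k f)) := by
  ext <;> simp

/-- `A` and `-B` are the extreme cursor positions needed to toggle the lamps of `g`: a lamp at
`x ≤ 0` is toggled by `(ta)⁻¹` moving the cursor from `x` to `x - 1 = -(1 - x)`. -/
noncomputable def potential (g : LampModel M) : ℤ :=
  sweepLength (reach id g.lamps) (reach (1 - ·) g.lamps) g.pos

@[simp] theorem potential_one : potential (1 : LampModel M) = 0 := by
  simp [potential, sweepLength]

/-- The step moves the cursor along one edge and toggles at most the lamp at the right end of
that edge. -/
def IsUnitStep (s : LampModel M) : Prop :=
  (s.pos = 1 ∨ s.pos = -1) ∧ s.lamps.support ⊆ {max 0 s.pos}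

theorem IsUnitStep.inv {s : LampModel M} (hs : IsUnitStep s) : IsUnitStep s⁻¹ := by
  refine ⟨by have := hs.1; simp only [inv_pos]; omega, fun x hx => ?_⟩
  rw [inv_lamps, mem_support_shift, Finsupp.support_neg] at hx
  have := Finset.mem_singleton.1 (hs.2 hx)
  simp only [inv_pos, Finset.mem_singleton]
  omega

theorem isUnitStep_ofPos_one : IsUnitStep (ofPos (.ofAdd 1) : LampModel M) := by
  simp [IsUnitStep]

theorem isUnitStep_ofPos_one_mul_ofLamps_single (v : M) :
    IsUnitStep (ofPos (.ofAdd 1) * ofLamps (.ofAdd (Finsupp.single 0 v))) :=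
  ⟨Or.inl (by simp), by simpa using Finsupp.support_single_subset⟩

theorem potential_mul_le (g : LampModel M) {s : LampModel M} (hs : IsUnitStep s) :
    potential (g * s) ≤ potential g + 1 := by
  have hsupp : (g * s).lamps.support ⊆ insert (max g.pos (g * s).pos) g.lamps.support := by
    intro x hx
    rcases Finset.mem_union.1 (Finsupp.support_add hx) with hx | hx
    · exact Finset.mem_insert_of_mem hx
    · have := Finset.mem_singleton.1 (hs.2 (mem_support_shift.1 hx))
      rw [Finset.mem_insert, mul_pos]
      omega
  exact sweepLength_le_add_one reach_nonneg reach_nonneg reach_nonneg reach_nonneg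
    (by have := hs.1; simp only [mul_pos]; omega) (reach_le_max_of_subset_insert hsupp)
    (reach_le_max_of_subset_insert hsupp)

end LampModel

open LampModel

noncomputable def toModel (m : ℕ) : Lamp m →* LampModel (ZMod m) :=
  PresentedGroup.toGroup
    (f := fun b => if b then ofLamps (.ofAdd (Finsupp.single 0 1)) else ofPos (.ofAdd 1)) <| by
    rintro r (hr | ⟨p, q, rfl⟩)
    · rw [Set.mem_singleton_iff.1 hr, map_pow, FreeGroup.lift_apply_of, if_pos rfl, ← map_pow,
        ← ofAdd_nsmul, Finsupp.smul_single, nsmul_one, ZMod.natCast_self, Finsupp.single_zero,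
        ofAdd_zero, map_one]
    · rw [map_commutatorElement, commutatorElement_eq_one_iff_commute]
      simp only [map_mul, map_zpow, FreeGroup.lift_apply_of, if_true, Bool.false_eq_true,
        if_false, ofPos_ofAdd_one_zpow, ofPos_mul_ofLamps_mul_ofPos]
      exact (Commute.all _ _).map ofLamps

@[simp] theorem toModel_lt (m : ℕ) : toModel m (lt m) = ofPos (.ofAdd 1) :=
  PresentedGroup.toGroup.of _

@[simp] theorem toModel_la (m : ℕ) :
    toModel m (la m) = ofLamps (.ofAdd (Finsupp.single 0 1)) :=
  PresentedGroup.toGroup.of _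

@[simp] theorem toModel_lampA (k : ℤ) :
    toModel 2 (lampA k) = ofLamps (.ofAdd (Finsupp.single k 1)) := by
  rw [lampA, map_mul, map_mul, map_zpow, map_zpow, toModel_lt, toModel_la, ofPos_ofAdd_one_zpow,
    ofPos_ofAdd_one_zpow, ofPos_mul_ofLamps_mul_ofPos, shift_single, zero_add]

theorem toModel_prod_map_lampA (L : List ℤ) :
    toModel 2 (L.map lampA).prod = ofLamps (.ofAdd (L.map fun p => Finsupp.single p 1).sum) := by
  induction L with
  | nil => simp
  | cons p L ih => simp [ih]

theorem la_mul_la : la 2 * la 2 = 1 := by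
  rw [← pow_two, la, PresentedGroup.of, ← map_pow]
  exact PresentedGroup.one_of_mem (Or.inl rfl)

theorem lampA_eq_mk (k : ℤ) : lampA k = PresentedGroup.mk (lampRels 2)
    (FreeGroup.of false ^ k * FreeGroup.of true * FreeGroup.of false ^ (-k)) := by
  rw [map_mul, map_mul, map_zpow, map_zpow]
  rfl

theorem lampA_commute (p q : ℤ) : Commute (lampA p) (lampA q) := by
  rw [← commutatorElement_eq_one_iff_commute, lampA_eq_mk, lampA_eq_mk, ← map_commutatorElement]
  exact PresentedGroup.one_of_mem (Or.inr ⟨p, q, rfl⟩)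

theorem commute_prod_map_lampA (P N : List ℤ) :
    Commute (P.map lampA).prod (N.map lampA).prod :=
  Commute.list_prod_left _ _ fun _ hx => Commute.list_prod_right _ _ fun _ hy => by
    obtain ⟨p, -, rfl⟩ := List.mem_map.1 hx
    obtain ⟨q, -, rfl⟩ := List.mem_map.1 hy
    exact lampA_commute p q

local notation "S₂" => ({lt 2, lt 2 * la 2} : Set (Lamp 2))

theorem closure_automataGens : Subgroup.closure S₂ = ⊤ := by
  rw [eq_top_iff, ← PresentedGroup.closure_range_of, Subgroup.closure_le]
  rintro _ ⟨_ | _, rfl⟩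
  · exact Subgroup.subset_closure (Set.mem_insert _ _)
  · show la 2 ∈ Subgroup.closure S₂
    simpa using mul_mem (inv_mem (Subgroup.subset_closure (Set.mem_insert _ _)))
      (Subgroup.subset_closure (Set.mem_insert_of_mem _ rfl) : lt 2 * la 2 ∈ Subgroup.closure S₂)

theorem lt_mem_automataGens : lt 2 ∈ S₂ ∨ (lt 2)⁻¹ ∈ S₂ := Or.inl (Set.mem_insert _ _)

theorem lt_mul_la_mem_automataGens : lt 2 * la 2 ∈ S₂ ∨ (lt 2 * la 2)⁻¹ ∈ S₂ :=
  Or.inl (Set.mem_insert_of_mem _ rfl)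

theorem lt_mul_la_inv_mem_automataGens : (lt 2 * la 2)⁻¹ ∈ S₂ ∨ (lt 2 * la 2)⁻¹⁻¹ ∈ S₂ := by
  rw [inv_inv]
  exact lt_mul_la_mem_automataGens.symm

theorem wordLength_mul_mul_le (g h k : Lamp 2) :
    (wordLength S₂ (g * h * k) : ℤ) ≤ wordLength S₂ g + wordLength S₂ h + wordLength S₂ k := by
  have := wordLength_mul_le closure_automataGens (g * h) k
  have := wordLength_mul_le closure_automataGens g h
  omega

theorem wordLength_lt_zpow_mul_mul_le (k : ℤ) {x : Lamp 2} (hx : x ∈ S₂ ∨ x⁻¹ ∈ S₂) (g : Lamp 2) :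
    (wordLength S₂ (lt 2 ^ k * x * g) : ℤ) ≤ |k| + 1 + wordLength S₂ g := by
  have := wordLength_mul_mul_le (lt 2 ^ k) x g
  have := wordLength_zpow_le lt_mem_automataGens k
  have := wordLength_le_one hx
  omega

theorem wordLength_sweepRight (L : List ℤ) (hL : L.Pairwise (· < ·)) {q e : ℤ}
    (hq : ∀ x ∈ L, q < x) (he : ∀ x ∈ L, x ≤ e) (hqe : q ≤ e) :
    (wordLength S₂ (lt 2 ^ (-q) * (L.map lampA).prod * lt 2 ^ e) : ℤ) ≤ e - q := by
  induction L generalizing q with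
  | nil =>
    have h := wordLength_zpow_le lt_mem_automataGens (-q + e)
    rw [List.map_nil, List.prod_nil, mul_one, ← zpow_add]
    rw [abs_of_nonneg (by omega)] at h
    omega
  | cons p L ih =>
    obtain ⟨hpL, hL⟩ := List.pairwise_cons.1 hL
    have hp := hq p List.mem_cons_self
    have hsplit : lt 2 ^ (-q) * ((p :: L).map lampA).prod * lt 2 ^ e =
        lt 2 ^ (p - q - 1) * (lt 2 * la 2) * (lt 2 ^ (-p) * (L.map lampA).prod * lt 2 ^ e) := by
      rw [List.map_cons, List.prod_cons, lampA]
      group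
    have htail := ih hL hpL (fun x hx => he x (List.mem_cons_of_mem _ hx)) (he p List.mem_cons_self)
    have hhead := wordLength_lt_zpow_mul_mul_le (p - q - 1) lt_mul_la_mem_automataGens
      (lt 2 ^ (-p) * (L.map lampA).prod * lt 2 ^ e)
    rw [hsplit]
    rw [abs_of_nonneg (by omega)] at hhead
    omega

theorem wordLength_sweepLeft (L : List ℤ) (hL : L.Pairwise (· > ·)) {c e : ℤ}
    (hc : ∀ x ∈ L, x ≤ c) (he : ∀ x ∈ L, e < x) (hec : e ≤ c) :
    (wordLength S₂ (lt 2 ^ (-c) * (L.map lampA).prod * lt 2 ^ e) : ℤ) ≤ c - e := by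
  induction L generalizing c with
  | nil =>
    have h := wordLength_zpow_le lt_mem_automataGens (-c + e)
    rw [List.map_nil, List.prod_nil, mul_one, ← zpow_add]
    rw [abs_of_nonpos (by omega)] at h
    omega
  | cons p L ih =>
    obtain ⟨hpL, hL⟩ := List.pairwise_cons.1 hL
    have hp := he p List.mem_cons_self
    have hsplit : lt 2 ^ (-c) * ((p :: L).map lampA).prod * lt 2 ^ e =
        lt 2 ^ (p - c) * (lt 2 * la 2)⁻¹ *
          (lt 2 ^ (-(p - 1)) * (L.map lampA).prod * lt 2 ^ e) := by
      rw [List.map_cons, List.prod_cons, lampA, mul_inv_rev, inv_eq_of_mul_eq_one_right la_mul_la]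
      group
    have htail := ih (c := p - 1) hL (fun x hx => by have := hpL x hx; omega)
      (fun x hx => he x (List.mem_cons_of_mem _ hx)) (by omega)
    have hhead := wordLength_lt_zpow_mul_mul_le (p - c) lt_mul_la_inv_mem_automataGens
      (lt 2 ^ (-(p - 1)) * (L.map lampA).prod * lt 2 ^ e)
    rw [hsplit]
    rw [abs_of_nonpos (by have := hc p List.mem_cons_self; omega)] at hhead
    omega

theorem isUnitStep_toModel {x : Lamp 2} (hx : x ∈ S₂ ∨ x⁻¹ ∈ S₂) : IsUnitStep (toModel 2 x) := by
  have key : ∀ y ∈ S₂, IsUnitStep (toModel 2 y) := by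
    rintro y (rfl | rfl)
    · simpa using isUnitStep_ofPos_one
    · simpa using isUnitStep_ofPos_one_mul_ofLamps_single (1 : ZMod 2)
  rcases hx with hx | hx
  · exact key x hx
  · simpa using (key _ hx).inv

theorem potential_toModel_le_wordLength (g : Lamp 2) :
    potential (toModel 2 g) ≤ wordLength S₂ g :=
  le_wordLength (potential ∘ toModel 2) (by simp)
    (fun g x hx => by simpa using potential_mul_le (toModel 2 g) (isUnitStep_toModel hx))
    (closure_automataGens ▸ Subgroup.mem_top g)

section NormalForm

variable {P N : List ℤ} {r A B : ℤ}

theorem potential_toModel_normalForm (hP : P.Pairwise (· < ·)) (hN : N.Pairwise (· > ·))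
    (hP0 : ∀ x ∈ P, 0 < x) (hN0 : ∀ x ∈ N, x ≤ 0)
    (hA0 : 0 ≤ A) (hPA : ∀ x ∈ P, x ≤ A) (hAP : A = 0 ∨ A ∈ P)
    (hB0 : 0 ≤ B) (hNB : ∀ x ∈ N, 1 - x ≤ B) (hBN : B = 0 ∨ 1 - B ∈ N) :
    potential (toModel 2 ((P.map lampA).prod * (N.map lampA).prod * lt 2 ^ r)) =
      sweepLength A B r := by
  set F := ((P ++ N).map fun p => Finsupp.single p (1 : ZMod 2)).sum
  have hmodel : toModel 2 ((P.map lampA).prod * (N.map lampA).prod * lt 2 ^ r) = ⟨F, r⟩ := by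
    ext <;> simp [F, toModel_prod_map_lampA, ofPos_ofAdd_one_zpow, Function.comp_def]
  have hnodup : (P ++ N).Nodup := List.nodup_append.2 ⟨hP.nodup, hN.nodup, fun x hxP y hyN => by
    have := hP0 x hxP; have := hN0 y hyN; omega⟩
  have hsupp : F.support = (P ++ N).toFinset :=
    Finsupp.support_sum_map_single_of_nodup one_ne_zero hnodup
  have hA : reach id F = A := by
    refine reach_eq hA0 (fun x hx => ?_) (hAP.imp_right fun h => ⟨A, by simp [hsupp, h], rfl⟩)
    rcases List.mem_append.1 (by simpa [hsupp] using hx) with hx | hx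
    · exact hPA x hx
    · have := hN0 x hx; simp only [id]; omega
  have hB : reach (1 - ·) F = B := by
    refine reach_eq hB0 (fun x hx => ?_)
      (hBN.imp_right fun h => ⟨1 - B, by simp [hsupp, h], by simp⟩)
    rcases List.mem_append.1 (by simpa [hsupp] using hx) with hx | hx
    · have := hP0 x hx; omega
    · exact hNB x hx
  rw [hmodel, potential, hA, hB]

theorem wordLength_normalForm_le_left_first (hP : P.Pairwise (· < ·)) (hN : N.Pairwise (· > ·))
    (hP0 : ∀ x ∈ P, 0 < x) (hN0 : ∀ x ∈ N, x ≤ 0) (hA0 : 0 ≤ A) (hPA : ∀ x ∈ P, x ≤ A)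
    (hB0 : 0 ≤ B) (hNB : ∀ x ∈ N, 1 - x ≤ B) :
    (wordLength S₂ ((P.map lampA).prod * (N.map lampA).prod * lt 2 ^ r) : ℤ) ≤
      2 * B + A + |r - A| := by
  have hw : (P.map lampA).prod * (N.map lampA).prod * lt 2 ^ r =
      lt 2 ^ (-0 : ℤ) * (N.map lampA).prod * lt 2 ^ (-B) *
        (lt 2 ^ (-(-B)) * (P.map lampA).prod * lt 2 ^ A) * lt 2 ^ (r - A) := by
    rw [(commute_prod_map_lampA P N).eq]
    group
  rw [hw]
  have := wordLength_mul_mul_le (lt 2 ^ (-0 : ℤ) * (N.map lampA).prod * lt 2 ^ (-B))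
    (lt 2 ^ (-(-B)) * (P.map lampA).prod * lt 2 ^ A) (lt 2 ^ (r - A))
  have := wordLength_sweepLeft N hN hN0 (c := 0) (e := -B)
    (fun x hx => by have := hNB x hx; omega) (by omega)
  have := wordLength_sweepRight P hP (q := -B) (e := A)
    (fun x hx => by have := hP0 x hx; omega) hPA (by omega)
  have := wordLength_zpow_le lt_mem_automataGens (r - A)
  omega

theorem wordLength_normalForm_le_right_first (hP : P.Pairwise (· < ·)) (hN : N.Pairwise (· > ·))
    (hP0 : ∀ x ∈ P, 0 < x) (hN0 : ∀ x ∈ N, x ≤ 0) (hA0 : 0 ≤ A) (hPA : ∀ x ∈ P, x ≤ A)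
    (hB0 : 0 ≤ B) (hNB : ∀ x ∈ N, 1 - x ≤ B) :
    (wordLength S₂ ((P.map lampA).prod * (N.map lampA).prod * lt 2 ^ r) : ℤ) ≤
      2 * A + B + |r + B| := by
  have hw : (P.map lampA).prod * (N.map lampA).prod * lt 2 ^ r =
      lt 2 ^ (-0 : ℤ) * (P.map lampA).prod * lt 2 ^ A *
        (lt 2 ^ (-A) * (N.map lampA).prod * lt 2 ^ (-B)) * lt 2 ^ (r + B) := by
    group
  rw [hw]
  have := wordLength_mul_mul_le (lt 2 ^ (-0 : ℤ) * (P.map lampA).prod * lt 2 ^ A)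
    (lt 2 ^ (-A) * (N.map lampA).prod * lt 2 ^ (-B)) (lt 2 ^ (r + B))
  have := wordLength_sweepRight P hP (q := 0) (e := A) hP0 hPA hA0
  have := wordLength_sweepLeft N hN (c := A) (e := -B)
    (fun x hx => by have := hN0 x hx; omega) (fun x hx => by have := hNB x hx; omega) (by omega)
  have := wordLength_zpow_le lt_mem_automataGens (r + B)
  omega

theorem wordLength_normalForm (hP : P.Pairwise (· < ·)) (hN : N.Pairwise (· > ·))
    (hP0 : ∀ x ∈ P, 0 < x) (hN0 : ∀ x ∈ N, x ≤ 0)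
    (hPA : ∀ x ∈ P, x ≤ A) (hAP : A = 0 ∨ A ∈ P)
    (hNB : ∀ x ∈ N, 1 - x ≤ B) (hBN : B = 0 ∨ 1 - B ∈ N) :
    (wordLength S₂ ((P.map lampA).prod * (N.map lampA).prod * lt 2 ^ r) : ℤ) =
      sweepLength A B r := by
  have hA0 : 0 ≤ A := hAP.elim ge_of_eq fun h => (hP0 A h).le
  have hB0 : 0 ≤ B := hBN.elim ge_of_eq fun h => by have := hN0 _ h; omega
  refine le_antisymm (le_min ?_ ?_) ?_
  · exact wordLength_normalForm_le_left_first hP hN hP0 hN0 hA0 hPA hB0 hNB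
  · exact wordLength_normalForm_le_right_first hP hN hP0 hN0 hA0 hPA hB0 hNB
  · rw [← potential_toModel_normalForm hP hN hP0 hN0 hA0 hPA hAP hB0 hNB hBN]
    exact potential_toModel_le_wordLength _

end NormalForm

/-- Word length formula for `L₂` with the automata generating set `{t, ta}`: if
`w = a_{i₁} ⋯ a_{i_m} a_{−j₁} ⋯ a_{−j_l} t^r` with `0 < i₁ < ⋯ < i_m` and
`0 ≤ j₁ < ⋯ < j_l`, then `|w| = D'(w)`, where `D'(w) = i_m + |r − i_m|` if `l = 0`,
and `D'(w) = min(2(j_l + 1) + i_m + |r − i_m|, 2 i_m + j_l + 1 + |r + j_l + 1|)`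
otherwise (with `i_m` interpreted as `0` when `m = 0`). -/
theorem lamplighter_automata_wordLength_formula (m l : ℕ) (r : ℤ)
    (i : Fin m → ℤ) (j : Fin l → ℤ) (hi : StrictMono i) (hj : StrictMono j)
    (hi0 : ∀ k, 0 < i k) (hj0 : ∀ k, 0 ≤ j k) :
    letI S : Set (Lamp 2) := {lt 2, lt 2 * la 2}
    letI w := (List.ofFn fun k => lampA (i k)).prod *
      (List.ofFn fun k => lampA (-(j k))).prod * lt 2 ^ r
    letI im : ℤ := ((List.ofFn i).getLast?).getD 0
    letI jl : ℤ := ((List.ofFn j).getLast?).getD 0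
    (wordLength S w : ℤ) =
      if l = 0 then im + |r - im|
      else min (2 * (jl + 1) + im + |r - im|) (2 * im + jl + 1 + |r + jl + 1|) := by
  set im := (List.ofFn i).getLast?.getD 0
  set jl := (List.ofFn j).getLast?.getD 0
  have hI : (List.ofFn i).Pairwise (· < ·) := List.pairwise_ofFn.2 fun _ _ h => hi h
  have hJ : (List.ofFn j).Pairwise (· < ·) := List.pairwise_ofFn.2 fun _ _ h => hj h
  have hi0' : ∀ x ∈ List.ofFn i, 0 < x := by simpa [List.mem_ofFn] using hi0
  have him0 : 0 ≤ im := (List.getLast?_getD_eq_or_mem _ _).elim ge_of_eq fun h => (hi0' im h).le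
  -- the default `-1` makes `B = 0` when `l = 0`
  have hB : (if l = 0 then 0 else jl + 1) = (List.ofFn j).getLast?.getD (-1) + 1 := by
    split_ifs with hl
    · simp [List.ofFn_eq_nil_iff.2 hl]
    · simp [jl, List.getLast?_eq_some_getLast (List.ofFn_eq_nil_iff.not.2 hl)]
  have hwP : (List.ofFn fun k => lampA (i k)) = (List.ofFn i).map lampA := by
    rw [List.map_ofFn]; rfl
  have hwN : (List.ofFn fun k => lampA (-(j k))) = (List.ofFn fun k => -(j k)).map lampA := by
    rw [List.map_ofFn]; rfl
  rw [hwP, hwN, wordLength_normalForm hI (List.pairwise_ofFn.2 fun _ _ h => neg_lt_neg (hj h))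
    hi0' (by simpa [List.mem_ofFn] using hj0) (fun x => (hI.imp le_of_lt).le_getLast?_getD 0)
    (List.getLast?_getD_eq_or_mem _ _) (B := (List.ofFn j).getLast?.getD (-1) + 1) ?_ ?_, ← hB]
  · split_ifs <;> simp only [sweepLength, abs_eq_max_neg] <;> omega
  · simp only [List.mem_ofFn, forall_exists_index, forall_apply_eq_imp_iff]
    intro k
    have := (hJ.imp le_of_lt).le_getLast?_getD (-1) (List.mem_ofFn.2 ⟨k, rfl⟩)
    omega
  · rcases List.getLast?_getD_eq_or_mem (List.ofFn j) (-1) with h | h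
    · exact Or.inl (by omega)
    · exact Or.inr (by simpa [List.mem_ofFn] using h)
end

section
/- In the lamplighter group L₂ = ℤ₂ ≀ ℤ with the automata generating set {t, ta}, for n ≥ 1 both words t^n (ta)^{−1} t^{−2n} (ta) t^n and t^{−n−1} (ta) t^{2n} (ta)^{−1} t^{−n+1} are geodesic representatives (of length 4n + 2) of the element g_n = (t^n a t^{−n})(t^{−n} a t^{n}). -/
open scoped commutatorElement

/-!
Let `L_m` act on configurations `(position, lamps) ∈ ℤ × (ℤ → ZMod m)`, `t` moving the
lamplighter one step right and `a` adding `1` to the lamp under them. Each of `t^{±1}, (ta)^{±1}`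
moves one step and changes at most the lamp on the edge it crosses, so a word of length `k`
traces a walk of length `k` from `0` through every edge it leaves lit. A walk from `0` to `p`
covering `[lo, hi]` has length at least `2 (hi - lo) - |p|`. For `gₙ` the lit edges are
`[-n, -n + 1]` and `[n, n + 1]` and `p = 0`, so every representative has length at least
`4n + 2`. Both words attain this; the second one spells the two factors of `gₙ` in the
other order, which commute by the relations of `L_m`.
-/

lemma wordLength_eq_length {G : Type*} [Group G] {S : Set G} {g : G} {l : List G}
    (hl : ∀ x ∈ l, x ∈ S ∨ x⁻¹ ∈ S) (hprod : l.prod = g)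
    (hmin : ∀ l' : List G, (∀ x ∈ l', x ∈ S ∨ x⁻¹ ∈ S) → l'.prod = g → l.length ≤ l'.length) :
    wordLength S g = l.length :=
  le_antisymm (Nat.sInf_le ⟨l, hl, rfl, hprod⟩) <|
    le_csInf ⟨_, l, hl, rfl, hprod⟩ fun _ ⟨l', hl', hlen, hprod'⟩ => hlen ▸ hmin l' hl' hprod'

section Words

variable {G : Type*} [Group G] (t a : G) (n : ℕ)

def leftWord : List G :=
  List.replicate n t ++ [(t * a)⁻¹] ++ List.replicate (2 * n) t⁻¹ ++ [t * a] ++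
    List.replicate n t

def rightWord : List G :=
  List.replicate (n + 1) t⁻¹ ++ [t * a] ++ List.replicate (2 * n) t ++ [(t * a)⁻¹] ++
    List.replicate (n - 1) t⁻¹

lemma length_leftWord : (leftWord t a n).length = 4 * n + 2 := by
  simp [leftWord]; omega

lemma length_rightWord {n : ℕ} (hn : 1 ≤ n) : (rightWord t a n).length = 4 * n + 2 := by
  simp [rightWord]; omega

lemma forall_mem_leftWord :
    ∀ x ∈ leftWord t a n, x ∈ ({t, t * a} : Set G) ∨ x⁻¹ ∈ ({t, t * a} : Set G) := by
  simp +contextual [leftWord, or_imp]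

lemma forall_mem_rightWord :
    ∀ x ∈ rightWord t a n, x ∈ ({t, t * a} : Set G) ∨ x⁻¹ ∈ ({t, t * a} : Set G) := by
  simp +contextual [rightWord, or_imp]

variable {t a}

lemma prod_leftWord (ha : a⁻¹ = a) :
    (leftWord t a n).prod = t ^ n * a * (t ^ n)⁻¹ * ((t ^ n)⁻¹ * a * t ^ n) := by
  simp only [leftWord, List.prod_append, List.prod_replicate, List.prod_singleton, mul_inv_rev, ha]
  group

lemma prod_rightWord {n : ℕ} (hn : 1 ≤ n) (ha : a⁻¹ = a)
    (hc : Commute (t ^ n * a * (t ^ n)⁻¹) ((t ^ n)⁻¹ * a * t ^ n)) :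
    (rightWord t a n).prod = t ^ n * a * (t ^ n)⁻¹ * ((t ^ n)⁻¹ * a * t ^ n) := by
  obtain ⟨k, rfl⟩ : ∃ k, n = k + 1 := ⟨n - 1, by omega⟩
  simp only [rightWord, List.prod_append, List.prod_replicate, List.prod_singleton, mul_inv_rev,
    ha, hc.eq, Nat.add_sub_cancel]
  group

end Words

section LampWalk

variable {A : Type*}

/-- Lamp `q` sits on the edge from `q` to `q + 1`. -/
def IsLampStep (c c' : ℤ × (ℤ → A)) : Prop :=
  (c'.1 = c.1 + 1 ∧ ∀ q ≠ c.1, c'.2 q = c.2 q) ∨ (c'.1 = c.1 - 1 ∧ ∀ q ≠ c'.1, c'.2 q = c.2 q)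

/-- `2 (hi - lo) - |c.1|` is the length of a shortest walk from `0` to `c.1` covering `[lo, hi]`. -/
def TourBound [Zero A] (k : ℤ) (c : ℤ × (ℤ → A)) : Prop :=
  ∃ lo hi : ℤ, lo ≤ 0 ∧ 0 ≤ hi ∧ lo ≤ c.1 ∧ c.1 ≤ hi ∧
    (∀ q, c.2 q ≠ 0 → lo ≤ q ∧ q < hi) ∧ 2 * (hi - lo) - |c.1| ≤ k

variable [Zero A]

lemma tourBound_zero : TourBound 0 ((0 : ℤ), (0 : ℤ → A)) :=
  ⟨0, 0, le_rfl, le_rfl, le_rfl, le_rfl, fun _ h => absurd rfl h, by simp⟩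

lemma TourBound.of_isLampStep {k : ℤ} {c c' : ℤ × (ℤ → A)} (h : TourBound k c)
    (hs : IsLampStep c c') : TourBound (k + 1) c' := by
  obtain ⟨lo, hi, hlo, hhi, hlop, hphi, hlamps, hk⟩ := h
  rcases hs with ⟨hp, hq⟩ | ⟨hp, hq⟩
  · refine ⟨lo, max hi c'.1, hlo, by omega, by omega, le_max_right _ _, fun q hne => ?_, ?_⟩
    · by_cases hqc : q = c.1
      · omega
      · have := hlamps q (hq q hqc ▸ hne)
        omega
    · rw [abs_eq_max_neg] at hk ⊢
      omega
  · refine ⟨min lo c'.1, hi, by omega, hhi, min_le_right _ _, by omega, fun q hne => ?_, ?_⟩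
    · by_cases hqc : q = c'.1
      · omega
      · have := hlamps q (hq q hqc ▸ hne)
        omega
    · rw [abs_eq_max_neg] at hk ⊢
      omega

lemma TourBound.four_mul_add_two_le {k : ℤ} {f : ℤ → A} (h : TourBound k (0, f)) {n : ℕ}
    (hpos : f n ≠ 0) (hneg : f (-n) ≠ 0) : 4 * n + 2 ≤ k := by
  obtain ⟨lo, hi, -, -, -, -, hlamps, hk⟩ := h
  have := hlamps _ hpos
  have := hlamps _ hneg
  simp only [abs_zero] at hk
  omega

end LampWalk

namespace Lamplighter

open Equiv

variable {m : ℕ}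

def move (m : ℕ) : Perm (ℤ × (ℤ → ZMod m)) := Equiv.addRight (1, 0)

def toggle (m : ℕ) : Perm (ℤ × (ℤ → ZMod m)) :=
  Equiv.prodShear (Equiv.refl ℤ) fun p => Equiv.addRight (Pi.single p 1)

@[simp] lemma move_zpow (i : ℤ) : move m ^ i = Equiv.addRight (i, 0) := by
  simp [move]

@[simp] lemma move_pow (n : ℕ) : move m ^ n = Equiv.addRight ((n : ℤ), 0) := by
  simpa using move_zpow (m := m) n

@[simp] lemma move_apply (c : ℤ × (ℤ → ZMod m)) : move m c = (c.1 + 1, c.2) := by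
  simp [move, Prod.ext_iff]

@[simp] lemma move_symm_apply (c : ℤ × (ℤ → ZMod m)) : (move m).symm c = (c.1 - 1, c.2) := by
  simp [move, Prod.ext_iff, sub_eq_add_neg]

@[simp] lemma toggle_apply (c : ℤ × (ℤ → ZMod m)) :
    toggle m c = (c.1, c.2 + Pi.single c.1 1) := rfl

@[simp] lemma toggle_symm_apply (c : ℤ × (ℤ → ZMod m)) :
    (toggle m).symm c = (c.1, c.2 - Pi.single c.1 1) := by
  simp [toggle, sub_eq_add_neg]

lemma toggle_pow_apply (k : ℕ) (c : ℤ × (ℤ → ZMod m)) :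
    (toggle m ^ k) c = (c.1, c.2 + k • Pi.single c.1 1) := by
  induction k with
  | zero => simp
  | succ k ih => simp [pow_succ', ih, add_smul, add_assoc]

lemma lift_eq_one_of_mem_lampRels :
    ∀ r ∈ lampRels m, FreeGroup.lift (fun b => if b then toggle m else move m) r = 1 := by
  have lift_conj (i : ℤ) : FreeGroup.lift (fun b => if b then toggle m else move m)
      (FreeGroup.of false ^ i * FreeGroup.of true * FreeGroup.of false ^ (-i)) =
        move m ^ i * toggle m * move m ^ (-i) := by
    simp
  rintro r (rfl | ⟨i, j, rfl⟩)
  · ext1 c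
    simp [toggle_pow_apply]
  · rw [map_commutatorElement, lift_conj, lift_conj, commutatorElement_eq_one_iff_mul_comm]
    ext1 c
    simp [add_right_comm]

noncomputable def act (m : ℕ) : Lamp m →* Perm (ℤ × (ℤ → ZMod m)) :=
  PresentedGroup.toGroup lift_eq_one_of_mem_lampRels

@[simp] lemma act_lt : act m (lt m) = move m := PresentedGroup.toGroup.of _

@[simp] lemma act_la : act m (la m) = toggle m := PresentedGroup.toGroup.of _

lemma la_pow_self : la m ^ m = 1 := by
  have : FreeGroup.of true ^ m ∈ lampRels m := Or.inl rfl
  simpa [la, PresentedGroup.of] using PresentedGroup.one_of_mem this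

lemma commute_conj_la (i j : ℤ) :
    Commute (lt m ^ i * la m * lt m ^ (-i)) (lt m ^ j * la m * lt m ^ (-j)) := by
  have : ⁅FreeGroup.of false ^ i * FreeGroup.of true * FreeGroup.of false ^ (-i),
      FreeGroup.of false ^ j * FreeGroup.of true * FreeGroup.of false ^ (-j)⁆ ∈ lampRels m :=
    Or.inr ⟨i, j, rfl⟩
  simpa [map_commutatorElement, commutatorElement_eq_one_iff_commute, la, lt,
    PresentedGroup.of] using PresentedGroup.one_of_mem this

lemma isLampStep_act {x : Lamp m} (hx : x ∈ ({lt m, lt m * la m} : Set (Lamp m)) ∨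
    x⁻¹ ∈ ({lt m, lt m * la m} : Set (Lamp m))) (c : ℤ × (ℤ → ZMod m)) :
    IsLampStep c (act m x c) := by
  obtain rfl | rfl | rfl | rfl : x = lt m ∨ x = lt m * la m ∨ x = (lt m)⁻¹ ∨
      x = (lt m * la m)⁻¹ := by
    simp only [Set.mem_insert_iff, Set.mem_singleton_iff, inv_eq_iff_eq_inv] at hx
    tauto
  · left; simp
  · left; simp +contextual
  · right; simp
  · right; simp +contextual

lemma tourBound_act_prod (l : List (Lamp m))
    (hl : ∀ x ∈ l, x ∈ ({lt m, lt m * la m} : Set (Lamp m)) ∨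
      x⁻¹ ∈ ({lt m, lt m * la m} : Set (Lamp m))) :
    TourBound l.length (act m l.prod (0, 0)) := by
  induction l with
  | nil => exact tourBound_zero
  | cons x l ih =>
    rw [List.prod_cons, map_mul, Perm.mul_apply, List.length_cons, Nat.cast_succ]
    exact (ih fun y hy => hl y (List.mem_cons_of_mem x hy)).of_isLampStep
      (isLampStep_act (hl x List.mem_cons_self) _)

lemma act_conj_mul_conj_apply_zero (n : ℕ) :
    act m (lt m ^ n * la m * (lt m ^ n)⁻¹ * ((lt m ^ n)⁻¹ * la m * lt m ^ n)) (0, 0) =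
      (0, Pi.single (n : ℤ) 1 + Pi.single (-(n : ℤ)) 1) := by
  simp [add_comm]

lemma four_mul_add_two_le_length [Nontrivial (ZMod m)] {n : ℕ} (hn : 1 ≤ n) (l : List (Lamp m))
    (hl : ∀ x ∈ l, x ∈ ({lt m, lt m * la m} : Set (Lamp m)) ∨
      x⁻¹ ∈ ({lt m, lt m * la m} : Set (Lamp m)))
    (hprod : l.prod = lt m ^ n * la m * (lt m ^ n)⁻¹ * ((lt m ^ n)⁻¹ * la m * lt m ^ n)) :
    4 * n + 2 ≤ l.length := by
  have h := tourBound_act_prod l hl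
  rw [hprod, act_conj_mul_conj_apply_zero] at h
  have hne : (n : ℤ) ≠ -n := by omega
  exact_mod_cast h.four_mul_add_two_le (by simp [hne]) (by simp [hne.symm])

lemma commute_conj_la_pow (n : ℕ) :
    Commute (lt m ^ n * la m * (lt m ^ n)⁻¹) ((lt m ^ n)⁻¹ * la m * lt m ^ n) := by
  simpa [zpow_neg] using commute_conj_la (m := m) n (-n)

lemma la_two_inv : (la 2)⁻¹ = la 2 :=
  inv_eq_of_mul_eq_one_right (by simpa [sq] using la_pow_self (m := 2))

end Lamplighter

/-- In `L₂` with the automata generating set `{t, ta}`, for `n ≥ 1` both words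
`tⁿ (ta)⁻¹ t⁻²ⁿ (ta) tⁿ` and `t⁻ⁿ⁻¹ (ta) t²ⁿ (ta)⁻¹ t⁻ⁿ⁺¹` are geodesic
representatives, of length `4n + 2`, of `gₙ = (tⁿ a t⁻ⁿ)(t⁻ⁿ a tⁿ)`. -/
theorem lamplighter_automata_gn_geodesics (n : ℕ) (hn : 1 ≤ n) :
    letI S : Set (Lamp 2) := {lt 2, lt 2 * la 2}
    letI a := la 2
    letI t := lt 2
    letI g := t ^ n * a * (t ^ n)⁻¹ * ((t ^ n)⁻¹ * a * t ^ n)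
    letI w1 := List.replicate n t ++ [(t * a)⁻¹] ++ List.replicate (2 * n) t⁻¹ ++
      [t * a] ++ List.replicate n t
    letI w2 := List.replicate (n + 1) t⁻¹ ++ [t * a] ++ List.replicate (2 * n) t ++
      [(t * a)⁻¹] ++ List.replicate (n - 1) t⁻¹
    wordLength S g = 4 * n + 2 ∧
    (∀ x ∈ w1, x ∈ S ∨ x⁻¹ ∈ S) ∧ w1.prod = g ∧ w1.length = 4 * n + 2 ∧
      w1.length = wordLength S g ∧
    (∀ x ∈ w2, x ∈ S ∨ x⁻¹ ∈ S) ∧ w2.prod = g ∧ w2.length = 4 * n + 2 ∧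
      w2.length = wordLength S g := by
  have hprod₁ := prod_leftWord (t := lt 2) n Lamplighter.la_two_inv
  have hprod₂ := prod_rightWord hn Lamplighter.la_two_inv (Lamplighter.commute_conj_la_pow n)
  have hwl := wordLength_eq_length (forall_mem_leftWord _ _ n) hprod₁ fun l hl hprod =>
    (length_leftWord _ _ n).trans_le (Lamplighter.four_mul_add_two_le_length hn l hl hprod)
  rw [length_leftWord] at hwl
  exact ⟨hwl, forall_mem_leftWord _ _ n, hprod₁, length_leftWord _ _ n,
    (length_leftWord _ _ n).trans hwl.symm, forall_mem_rightWord _ _ n, hprod₂,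
    length_rightWord _ _ hn, (length_rightWord _ _ hn).trans hwl.symm⟩
end
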